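/- The combinatorial fusion of two simple qq-characters is commutative and independent of the choice of base monomials: if χ₁, χ₂ are simple qq-characters with chosen base monomials m₀∈χ₁, n₀∈χ₂, then (m,n)_{m₀,n₀} = (n,m)_{n₀,m₀} for all m∈χ₁, n∈χ₂, and changing the base monomials shifts all pairings by a common constant, so that χ₁*χ₂ = χ₂*χ₁ is well defined. -/

import Mathlib

/-! The group `Γ` of monomials `σ` is written additively; the Laurent ring `R` is modelled as
`Γ →₀ ℤ`, the constant term of `x : Γ →₀ ℤ` being `x 0`.  Monomials in the `Y_{i,σ}` are
exponent vectors `(I × Γ) →₀ ℤ`.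

The contractions `l_{i,σ₀}` and `r_{i,σ₀}` have the same constant term `C_{i,σ₀}`, an additive
functional of the exponent vector.  Writing `c(x)_j = C_{i_j,σ_j}(x)` and
`G_{jk} = C_{i_j,σ_j}(A_{i_k,σ_k})`, this gives `(m,n)_{m₀,n₀} = a·c(n₀) + b·c(m₀) + b·G a`.
Since `σm` is symmetric, so is `G`, and both claims become identities for the symmetric
bilinear form `G`. -/

/-- Exponent vectors of monomials in the variables `Y_{i,σ}`. -/
abbrev YMon (I Γ : Type*) : Type _ := (I × Γ) →₀ ℤ

/-- The combinatorial left contraction `l_{i,σ₀}`: `l_{i,σ₀}(Y_{j,τ}) = δ_{ij}(q-q⁻¹)τσ₀⁻¹`,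
with values in the Laurent ring `Γ →₀ ℤ`. -/
noncomputable def lcon {I Γ : Type*} [DecidableEq I] [AddCommGroup Γ]
    (q : Γ) (i : I) (σ₀ : Γ) (m : YMon I Γ) : Γ →₀ ℤ :=
  m.sum fun p c =>
    c • (if p.1 = i then Finsupp.single (q + p.2 - σ₀) 1 - Finsupp.single (-q + p.2 - σ₀) 1
         else 0)

/-- The combinatorial right contraction `r_{i,σ₀}`: `r_{i,σ₀}(Y_{j,τ}) = -δ_{ij}(q-q⁻¹)τ⁻¹σ₀`. -/
noncomputable def rcon {I Γ : Type*} [DecidableEq I] [AddCommGroup Γ]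
    (q : Γ) (i : I) (σ₀ : Γ) (m : YMon I Γ) : Γ →₀ ℤ :=
  m.sum fun p c =>
    c • (if p.1 = i then -(Finsupp.single (q + σ₀ - p.2) 1 - Finsupp.single (-q + σ₀ - p.2) 1)
         else 0)

/-- The shifted affine root `A_{j,τ}`. -/
noncomputable def affRoot {I Γ : Type*} [Fintype I] [AddCommGroup Γ]
    (σm : I → I → Γ) (j : I) (τ : Γ) : YMon I Γ :=
  ∑ i : I, (Finsupp.single (i, σm i j + τ) (1 : ℤ) - Finsupp.single (i, -σm i j + τ) 1)

/-- The monomial `x₀ · Π_j A_{i_j,σ_j}^{c_j}`. -/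
noncomputable def monoOf {I Γ J : Type*} [Fintype I] [Fintype J] [AddCommGroup Γ]
    (σm : I → I → Γ) (idx : J → I) (sh : J → Γ) (x0 : YMon I Γ) (c : J → ℤ) : YMon I Γ :=
  x0 + ∑ j : J, c j • affRoot σm (idx j) (sh j)

/-- The relative pairing `(m,n)_{m₀,n₀}`: the constant term of
`Σ_j (a_j l_{i_j,σ_j}(n₀) + b_j r_{i_j,σ_j}(m))`, where `m = m₀ Π A^{a_j}`,
`n = n₀ Π A^{b_j}`. -/
noncomputable def pairing {I Γ J : Type*} [Fintype I] [DecidableEq I] [Fintype J]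
    [AddCommGroup Γ]
    (q : Γ) (σm : I → I → Γ) (idx : J → I) (sh : J → Γ) (m0 n0 : YMon I Γ)
    (a b : J → ℤ) : ℤ :=
  (∑ j : J,
      (a j • lcon q (idx j) (sh j) n0
        + b j • rcon q (idx j) (sh j) (monoOf σm idx sh m0 a))) 0

open Matrix

section ConstantTerm
variable {I Γ : Type*} [DecidableEq I] [AddCommGroup Γ]

/-- The Laurent polynomial `q - q⁻¹`. -/
noncomputable def qDiff (q : Γ) : Γ →₀ ℤ := Finsupp.single q 1 - Finsupp.single (-q) 1

lemma qDiff_apply_neg (q x : Γ) : qDiff q (-x) = -qDiff q x := by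
  classical
  simp only [qDiff, Finsupp.sub_apply, Finsupp.single_apply, ← neg_eq_iff_eq_neg, neg_neg]
  ring

lemma single_sub_single_apply_zero (q x : Γ) :
    (Finsupp.single (q + x) 1 - Finsupp.single (-q + x) 1 : Γ →₀ ℤ) 0 = qDiff q (-x) := by
  classical
  simp only [qDiff, Finsupp.sub_apply, Finsupp.single_apply, add_eq_zero_iff_eq_neg]

noncomputable def contractionConst (q : Γ) (i : I) (σ₀ : Γ) : YMon I Γ →+ ℤ :=
  Finsupp.liftAddHom fun p => zmultiplesHom ℤ (if p.1 = i then qDiff q (σ₀ - p.2) else 0)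

lemma contractionConst_apply (q : Γ) (i : I) (σ₀ : Γ) (m : YMon I Γ) :
    contractionConst q i σ₀ m
      = m.sum fun p c => c * if p.1 = i then qDiff q (σ₀ - p.2) else 0 :=
  rfl

lemma contractionConst_single (q : Γ) (i : I) (σ₀ : Γ) (p : I × Γ) (c : ℤ) :
    contractionConst q i σ₀ (Finsupp.single p c)
      = c * if p.1 = i then qDiff q (σ₀ - p.2) else 0 := by
  simp [contractionConst]

lemma lcon_apply_zero (q : Γ) (i : I) (σ₀ : Γ) (m : YMon I Γ) :
    lcon q i σ₀ m 0 = contractionConst q i σ₀ m := by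
  rw [contractionConst_apply, lcon, Finsupp.sum_apply]
  refine Finsupp.sum_congr fun p _ => ?_
  split_ifs
  · rw [Finsupp.smul_apply, smul_eq_mul, add_sub_assoc, add_sub_assoc,
      single_sub_single_apply_zero, neg_sub]
  · simp

lemma rcon_apply_zero (q : Γ) (i : I) (σ₀ : Γ) (m : YMon I Γ) :
    rcon q i σ₀ m 0 = contractionConst q i σ₀ m := by
  rw [contractionConst_apply, rcon, Finsupp.sum_apply]
  refine Finsupp.sum_congr fun p _ => ?_
  split_ifs
  · rw [Finsupp.smul_apply, smul_eq_mul, Finsupp.neg_apply, add_sub_assoc, add_sub_assoc,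
      single_sub_single_apply_zero, qDiff_apply_neg, neg_neg]
  · simp

end ConstantTerm

section AffineRoots
variable {I Γ : Type*} [Fintype I] [DecidableEq I] [AddCommGroup Γ]

lemma contractionConst_affRoot (q : Γ) (σm : I → I → Γ) (i : I) (σ₀ : Γ) (j : I) (τ : Γ) :
    contractionConst q i σ₀ (affRoot σm j τ)
      = qDiff q (σ₀ - (σm i j + τ)) - qDiff q (σ₀ - (-σm i j + τ)) := by
  simp only [affRoot, map_sum, map_sub, contractionConst_single, one_mul,
    Finset.sum_sub_distrib, Finset.sum_ite_eq', Finset.mem_univ, if_true]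

lemma contractionConst_affRoot_comm (q : Γ) {σm : I → I → Γ} (hsym : ∀ i j, σm i j = σm j i)
    (i : I) (σ₀ : Γ) (j : I) (τ : Γ) :
    contractionConst q i σ₀ (affRoot σm j τ) = contractionConst q j τ (affRoot σm i σ₀) := by
  rw [contractionConst_affRoot, contractionConst_affRoot, hsym j i,
    show τ - (σm i j + σ₀) = -(σ₀ - (-σm i j + τ)) by abel,
    show τ - (-σm i j + σ₀) = -(σ₀ - (σm i j + τ)) by abel, qDiff_apply_neg, qDiff_apply_neg]
  ring

end AffineRoots

lemma Matrix.IsSymm.dotProduct_mulVec_comm {n R : Type*} [Fintype n] [CommSemiring R]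
    {A : Matrix n n R} (hA : A.IsSymm) (x y : n → R) :
    x ⬝ᵥ (A *ᵥ y) = y ⬝ᵥ (A *ᵥ x) := by
  rw [dotProduct_mulVec, ← mulVec_transpose, hA.eq, dotProduct_comm]

lemma monoOf_monoOf {I Γ J : Type*} [Fintype I] [Fintype J] [AddCommGroup Γ]
    (σm : I → I → Γ) (idx : J → I) (sh : J → Γ) (x₀ : YMon I Γ) (c d : J → ℤ) :
    monoOf σm idx sh (monoOf σm idx sh x₀ c) d = monoOf σm idx sh x₀ (c + d) := by
  simp only [monoOf, Pi.add_apply, add_smul, Finset.sum_add_distrib, add_assoc]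

section Pairing
variable {I Γ J : Type*} [Fintype I] [DecidableEq I] [AddCommGroup Γ]
  (q : Γ) (σm : I → I → Γ) (idx : J → I) (sh : J → Γ)

noncomputable def contractionVec (x : YMon I Γ) : J → ℤ :=
  fun j => contractionConst q (idx j) (sh j) x

noncomputable def rootGram : Matrix J J ℤ :=
  of fun j k => contractionConst q (idx j) (sh j) (affRoot σm (idx k) (sh k))

variable {σm} in
lemma rootGram_isSymm (hsym : ∀ i j, σm i j = σm j i) : (rootGram q σm idx sh).IsSymm :=
  IsSymm.ext fun _ _ => contractionConst_affRoot_comm q hsym _ _ _ _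

variable [Fintype J]

lemma contractionVec_monoOf (x₀ : YMon I Γ) (c : J → ℤ) :
    contractionVec q idx sh (monoOf σm idx sh x₀ c)
      = contractionVec q idx sh x₀ + rootGram q σm idx sh *ᵥ c := by
  ext j
  simp [contractionVec, monoOf, rootGram, mulVec, dotProduct, mul_comm]

lemma pairing_eq_dotProduct (m₀ n₀ : YMon I Γ) (a b : J → ℤ) :
    pairing q σm idx sh m₀ n₀ a b
      = a ⬝ᵥ contractionVec q idx sh n₀
        + b ⬝ᵥ contractionVec q idx sh (monoOf σm idx sh m₀ a) := by
  simp [pairing, lcon_apply_zero, rcon_apply_zero, dotProduct, contractionVec,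
    Finset.sum_add_distrib]

end Pairing

theorem statement5_general {I Γ J : Type*} [Fintype I] [DecidableEq I] [Fintype J] [AddCommGroup Γ]
    (q : Γ) (σm : I → I → Γ)
    (hsym : ∀ i j, σm i j = σm j i)
    (idx : J → I) (sh : J → Γ) (m0 n0 : YMon I Γ) :
    (∀ a b : J → ℤ,
      pairing q σm idx sh m0 n0 a b = pairing q σm idx sh n0 m0 b a) ∧
    (∀ a b a0 b0 : J → ℤ,
      pairing q σm idx sh (monoOf σm idx sh m0 a0) (monoOf σm idx sh n0 b0)
          (a - a0) (b - b0)
        = pairing q σm idx sh m0 n0 a b - pairing q σm idx sh m0 n0 a0 b0) := by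
  have hG := rootGram_isSymm q idx sh hsym
  refine ⟨fun a b => ?_, fun a b a0 b0 => ?_⟩
  · simp only [pairing_eq_dotProduct, contractionVec_monoOf, dotProduct_add,
      hG.dotProduct_mulVec_comm b a]
    abel
  · simp only [pairing_eq_dotProduct, monoOf_monoOf, add_sub_cancel, contractionVec_monoOf,
      dotProduct_add, sub_dotProduct, hG.dotProduct_mulVec_comm a0 b0,
      hG.dotProduct_mulVec_comm a b0]
    abel

theorem statement5 {I Γ J : Type*} [Fintype I] [DecidableEq I] [Fintype J] [AddCommGroup Γ]
    (q : Γ) (σm : I → I → Γ)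
    (hsym : ∀ i j, σm i j = σm j i) (hdiag : ∀ i, σm i i = q)
    (idx : J → I) (sh : J → Γ) (m0 n0 : YMon I Γ) :
    (∀ a b : J → ℤ,
      pairing q σm idx sh m0 n0 a b = pairing q σm idx sh n0 m0 b a) ∧
    (∀ a b a0 b0 : J → ℤ,
      pairing q σm idx sh (monoOf σm idx sh m0 a0) (monoOf σm idx sh n0 b0)
          (a - a0) (b - b0)
        = pairing q σm idx sh m0 n0 a b - pairing q σm idx sh m0 n0 a0 b0) :=
  statement5_general q σm hsym idx sh m0 n0
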